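/- Consider ℤ² with the supremum metric d_∞ and the measure μ defined by μ(n,m) = 4^{|m|} if n = 0; μ(n,m) = 2^{n²} if n < 0 and m = 0; and μ(n,m) = 1 otherwise. Let g(n,m) = 2^{n²} if n > 0 and m = 0, and g(n,m) = 0 otherwise. Then the centered maximal function satisfies M^c g(1,0) = ∞. -/

import Mathlib

open MeasureTheory Metric Filter Set ENNReal

/-- The centered Hardy–Littlewood maximal function of `f` at `x`,
with respect to the measure `μ`. -/
noncomputable def centeredMaximal {X : Type*} [MeasurableSpace X] [PseudoMetricSpace X]
    (μ : Measure X) (f : X → ℝ) (x : X) : ℝ≥0∞ :=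
  ⨆ (r : ℝ) (_ : 0 < r),
    (∫⁻ y in Metric.ball x r, ENNReal.ofReal |f y| ∂μ) / μ (Metric.ball x r)

/-- The non-centered Hardy–Littlewood maximal function of `f` at `x`:
the supremum is taken over all open balls containing `x`. -/
noncomputable def noncenteredMaximal {X : Type*} [MeasurableSpace X] [PseudoMetricSpace X]
    (μ : Measure X) (f : X → ℝ) (x : X) : ℝ≥0∞ :=
  ⨆ (c : X) (r : ℝ) (_ : 0 < r) (_ : x ∈ Metric.ball c r),
    (∫⁻ y in Metric.ball c r, ENNReal.ofReal |f y| ∂μ) / μ (Metric.ball c r)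

/-- `f ∈ L¹_loc(μ)`: `∫_B |f| dμ < ∞` for every open ball `B`. -/
def LocallyIntegrableBall {X : Type*} [MeasurableSpace X] [PseudoMetricSpace X]
    (μ : Measure X) (f : X → ℝ) : Prop :=
  ∀ (c : X) (r : ℝ), 0 < r → (∫⁻ y in Metric.ball c r, ENNReal.ofReal |f y| ∂μ) < ⊤

/-! The ball of radius `k + 2` about `(1, 0)` contains the point `(k + 2, 0)`, of weight `1`,
where `g = 2 ^ (k + 2) ^ 2`. It has at most `4 ^ (k + 2)` points, and for `k ≥ 3` each weighs
at most `2 ^ k ^ 2`, the heavy ones inside it being `(n, 0)` with `-k ≤ n < 0` and `(0, m)`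
with `|m| ≤ k + 1`. Hence the average of `|g|` over that ball is at least
`2 ^ (k + 2) ^ 2 / (2 ^ k ^ 2 * 4 ^ (k + 2)) = 4 ^ k`. -/

section CenteredMaximal

variable {X : Type*} [MeasurableSpace X] [PseudoMetricSpace X] {μ : Measure X} {f : X → ℝ}
  {x : X}

theorem le_centeredMaximal {r : ℝ} (hr : 0 < r) :
    (∫⁻ y in ball x r, ENNReal.ofReal |f y| ∂μ) / μ (ball x r) ≤ centeredMaximal μ f x :=
  le_iSup₂ (f := fun r (_ : 0 < r) => (∫⁻ y in ball x r, ENNReal.ofReal |f y| ∂μ) / μ (ball x r))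
    r hr

theorem centeredMaximal_eq_top_of_forall_exists_le
    (h : ∀ n : ℕ, ∃ r > 0,
      (n : ℝ≥0∞) ≤ (∫⁻ y in ball x r, ENNReal.ofReal |f y| ∂μ) / μ (ball x r)) :
    centeredMaximal μ f x = ⊤ := by
  refine eq_top_iff.2 (iSup_natCast ▸ iSup_le fun n => ?_)
  obtain ⟨r, hr, hn⟩ := h n
  exact hn.trans (le_centeredMaximal hr)

end CenteredMaximal

theorem MeasureTheory.withDensity_apply_le_mul {α : Type*} [MeasurableSpace α] {μ : Measure α}
    {w : α → ℝ≥0∞} {s : Set α} (hs : MeasurableSet s) {C : ℝ≥0∞} (hw : ∀ x ∈ s, w x ≤ C) :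
    μ.withDensity w s ≤ C * μ s := by
  rw [withDensity_apply _ hs, ← setLIntegral_const]
  exact setLIntegral_mono' hs hw

theorem Nat.two_mul_sub_one_le_two_pow (m : ℕ) : 2 * m - 1 ≤ 2 ^ m := by
  cases m with
  | zero => simp
  | succ m =>
    have hm := Nat.lt_two_pow_self (n := m)
    rw [pow_succ]
    omega

theorem Int.ball_natCast_eq_Ioo (a : ℤ) (k : ℕ) : ball a (k : ℝ) = Ioo (a - k) (a + k) := by
  rw [Int.ball_eq_Ioo, ← Int.cast_natCast, ← Int.cast_sub, ← Int.cast_add, Int.floor_intCast,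
    Int.ceil_intCast]

theorem Int.ball_prod_natCast (a b : ℤ) (k : ℕ) :
    ball (a, b) (k : ℝ) = Ioo (a - k) (a + k) ×ˢ Ioo (b - k) (b + k) := by
  rw [← ball_prod_same, Int.ball_natCast_eq_Ioo, Int.ball_natCast_eq_Ioo]

theorem Int.count_ball_prod_natCast (c : ℤ × ℤ) (k : ℕ) :
    Measure.count (ball c (k : ℝ)) = ((2 * k - 1) ^ 2 : ℕ) := by
  obtain ⟨a, b⟩ := c
  rw [Int.ball_prod_natCast, ← Finset.coe_Ioo, ← Finset.coe_Ioo, ← Finset.coe_product,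
    Measure.count_apply_finset, Finset.card_product, Int.card_Ioo, Int.card_Ioo, sq]
  congr 2 <;> omega

theorem Int.count_ball_prod_natCast_le (c : ℤ × ℤ) (k : ℕ) :
    Measure.count (ball c (k : ℝ)) ≤ 4 ^ k := by
  have h : (2 * k - 1) ^ 2 ≤ 4 ^ k := by
    rw [show 4 ^ k = (2 ^ k) ^ 2 by rw [← pow_right_comm]; norm_num]
    exact Nat.pow_le_pow_left (Nat.two_mul_sub_one_le_two_pow k) 2
  rw [Int.count_ball_prod_natCast]
  exact_mod_cast h

noncomputable def axisWeight (p : ℤ × ℤ) : ℝ≥0∞ :=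
  if p.1 = 0 then (4 : ℝ≥0∞) ^ p.2.natAbs
  else if p.1 < 0 ∧ p.2 = 0 then (2 : ℝ≥0∞) ^ (p.1 ^ 2).toNat
  else 1

def axisSpike (p : ℤ × ℤ) : ℝ :=
  if 0 < p.1 ∧ p.2 = 0 then (2 : ℝ) ^ (p.1 ^ 2).toNat else 0

theorem axisWeight_le_of_mem_ball {k : ℕ} (hk : 3 ≤ k) {p : ℤ × ℤ}
    (hp : p ∈ ball ((1, 0) : ℤ × ℤ) ((k + 2 : ℕ) : ℝ)) : axisWeight p ≤ 2 ^ (k ^ 2) := by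
  obtain ⟨a, b⟩ := p
  rw [Int.ball_prod_natCast, mem_prod, mem_Ioo, mem_Ioo] at hp
  push_cast at hp
  unfold axisWeight
  split_ifs with ha hneg
  · have : 3 * k ≤ k ^ 2 := by nlinarith
    calc (4 : ℝ≥0∞) ^ b.natAbs = 2 ^ (2 * b.natAbs) := by rw [pow_mul]; norm_num
      _ ≤ 2 ^ (k ^ 2) := pow_le_pow_right₀ one_le_two (by omega)
  · refine pow_le_pow_right₀ one_le_two (Int.toNat_le.2 ?_)
    push_cast
    nlinarith
  · exact one_le_pow₀ one_le_two

theorem axisWeight_of_pos {m : ℤ} (hm : 0 < m) : axisWeight (m, 0) = 1 := by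
  simp [axisWeight, hm.ne', hm.not_gt]

theorem two_pow_sq_le_setLIntegral_axisSpike (k : ℕ) :
    (2 : ℝ≥0∞) ^ ((k + 2) ^ 2) ≤ ∫⁻ y in ball ((1, 0) : ℤ × ℤ) ((k + 2 : ℕ) : ℝ),
      ENNReal.ofReal |axisSpike y| ∂Measure.count.withDensity axisWeight := by
  have hq : (((k + 2 : ℕ) : ℤ), (0 : ℤ)) ∈ ball ((1, 0) : ℤ × ℤ) ((k + 2 : ℕ) : ℝ) := by
    simp only [Int.ball_prod_natCast, mem_prod, mem_Ioo]
    omega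
  refine le_trans ?_ (lintegral_mono_set (singleton_subset_iff.2 hq))
  rw [lintegral_singleton, withDensity_apply _ (measurableSet_singleton _), lintegral_singleton,
    Measure.count_singleton, axisWeight_of_pos (by positivity), mul_one, mul_one, axisSpike,
    if_pos ⟨by positivity, rfl⟩, ← Nat.cast_pow, Int.toNat_natCast, abs_of_pos (by positivity),
    ENNReal.ofReal_pow zero_le_two, ENNReal.ofReal_ofNat]

theorem four_pow_le_average_axisSpike {k : ℕ} (hk : 3 ≤ k) :
    (4 : ℝ≥0∞) ^ k ≤ (∫⁻ y in ball ((1, 0) : ℤ × ℤ) ((k + 2 : ℕ) : ℝ),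
      ENNReal.ofReal |axisSpike y| ∂Measure.count.withDensity axisWeight) /
      Measure.count.withDensity axisWeight (ball ((1, 0) : ℤ × ℤ) ((k + 2 : ℕ) : ℝ)) := by
  have hden : Measure.count.withDensity axisWeight (ball ((1, 0) : ℤ × ℤ) ((k + 2 : ℕ) : ℝ)) ≤
      2 ^ (k ^ 2) * 4 ^ (k + 2) :=
    (withDensity_apply_le_mul .of_discrete fun _ hp => axisWeight_le_of_mem_ball hk hp).trans
      (by gcongr; exact Int.count_ball_prod_natCast_le _ _)
  have hnum := two_pow_sq_le_setLIntegral_axisSpike k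
  have hnum_ne := (hnum.trans_lt' (by positivity : (0 : ℝ≥0∞) < 2 ^ ((k + 2) ^ 2))).ne'
  rw [ENNReal.le_div_iff_mul_le (.inr hnum_ne) (.inl (ne_top_of_le_ne_top (by finiteness) hden))]
  calc (4 : ℝ≥0∞) ^ k * _ ≤ 4 ^ k * (2 ^ (k ^ 2) * 4 ^ (k + 2)) := by gcongr
    _ = 2 ^ ((k + 2) ^ 2) := by
      rw [show (4 : ℝ≥0∞) = 2 ^ 2 by norm_num, ← pow_mul, ← pow_mul, ← pow_add, ← pow_add]
      ring_nf
    _ ≤ _ := hnum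

/-- On `ℤ²` with the supremum metric and measure with point weights
`μ(n,m) = 4^{|m|}` if `n = 0`, `μ(n,m) = 2^{n²}` if `n < 0, m = 0`, and `1` otherwise,
for `g(n,m) = 2^{n²}` if `n > 0, m = 0` and `0` otherwise, the centered maximal function
satisfies `M^c g(1,0) = ∞`. -/
theorem centeredMaximal_eq_top_at_one (μ : Measure (ℤ × ℤ))
    (hμ : μ = Measure.count.withDensity
      (fun p : ℤ × ℤ =>
        if p.1 = 0 then (4 : ℝ≥0∞) ^ p.2.natAbs
        else if p.1 < 0 ∧ p.2 = 0 then (2 : ℝ≥0∞) ^ (p.1 ^ 2).toNat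
        else 1))
    (g : ℤ × ℤ → ℝ)
    (hg : g = fun p : ℤ × ℤ => if 0 < p.1 ∧ p.2 = 0 then (2 : ℝ) ^ (p.1 ^ 2).toNat else 0) :
    centeredMaximal μ g ((1, 0) : ℤ × ℤ) = ⊤ := by
  subst hμ hg
  -- `axisWeight` and `axisSpike` unfold to the functions in `hμ` and `hg`
  refine centeredMaximal_eq_top_of_forall_exists_le fun n =>
    ⟨((n + 3 + 2 : ℕ) : ℝ), by positivity, ?_⟩
  have hn : n ≤ 4 ^ (n + 3) := (Nat.le_add_right n 3).trans (Nat.lt_pow_self (by norm_num)).le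
  calc (n : ℝ≥0∞) ≤ 4 ^ (n + 3) := by exact_mod_cast hn
    _ ≤ _ := four_pow_le_average_axisSpike le_add_self
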